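/- arXiv:2111.01539 — 5 statements merged into one kernel-verified Lean document; each statement's English description precedes it below -/
import Mathlib

section
/- Let R be a local ring and A an abelian group. Any function f : R* → A satisfying f(a) + f(b) = f(a+b) whenever a, b, and a+b are all units, extends to a unique Z-linear (additive) function R → A, provided the residue field of R is infinite. -/
open IsLocalRing

/-- In a local ring with infinite residue field, we can find a unit avoiding
any finite set of residues: `u` is a unit and `u - r` is a unit for each `r` in the set. -/
lemma aux_avoid {R : Type*} [CommRing R] [IsLocalRing R]
    [Infinite (IsLocalRing.ResidueField R)] (s : Finset R) :
    ∃ u : R, IsUnit u ∧ ∀ r ∈ s, IsUnit (u - r) := by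
  classical
  obtain ⟨t, ht⟩ := Infinite.exists_notMem_finset
    ((insert (0:R) s).image (IsLocalRing.residue R))
  obtain ⟨u, hu⟩ := IsLocalRing.residue_surjective (R := R) t
  refine ⟨u, ?_, ?_⟩
  · rw [← IsLocalRing.residue_ne_zero_iff_isUnit, hu]
    intro h0
    exact ht (Finset.mem_image.2 ⟨0, Finset.mem_insert_self _ _, by simp [h0]⟩)
  · intro r hr
    rw [← IsLocalRing.residue_ne_zero_iff_isUnit, map_sub, hu, sub_ne_zero]
    intro h0
    exact ht (Finset.mem_image.2 ⟨r, Finset.mem_insert_of_mem hr, h0.symm⟩)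

/-- Well-definedness: two two-unit representations of the same element give the same value. -/
lemma aux_welldef {R A : Type*} [CommRing R] [IsLocalRing R]
    [Infinite (IsLocalRing.ResidueField R)] [AddCommGroup A] (f : Rˣ → A)
    (hf : ∀ a b c : Rˣ, (a : R) + (b : R) = (c : R) → f a + f b = f c)
    (u v u' v' : Rˣ) (h : (u : R) + v = (u' : R) + v') :
    f u + f v = f u' + f v' := by
  classical
  obtain ⟨s, hs, hs'⟩ := aux_avoid ({-(u:R), (v:R), (u':R)-(u:R)} : Finset R)
  have h1 : IsUnit ((s:R) + u) := by
    have := hs' (-(u:R)) (by simp)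
    simpa [sub_neg_eq_add] using this
  have h2 : IsUnit ((v:R) - s) := by
    have := hs' (v:R) (by simp)
    simpa using this.neg
  have h3 : IsUnit (((u':R) - u) - s) := by
    have := hs' ((u':R)-(u:R)) (by simp)
    simpa using this.neg
  -- a = u + s, b = v - s, t = u' - u - s
  have ea : f u + f hs.unit = f h1.unit := hf u hs.unit h1.unit (by simp only [IsUnit.unit_spec]; ring)
  have eb : f h2.unit + f hs.unit = f v := hf h2.unit hs.unit v (by simp only [IsUnit.unit_spec]; ring)
  have et : f h1.unit + f h3.unit = f u' := hf h1.unit h3.unit u' (by simp only [IsUnit.unit_spec]; ring)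
  have ev : f v' + f h3.unit = f h2.unit := by
    apply hf v' h3.unit h2.unit
    simp only [IsUnit.unit_spec]
    have : (v' : R) = (u:R) + v - u' := by rw [h]; ring
    rw [this]; ring
  rw [← et, ← ea, ← eb, ← ev]
  abel

/-- Let `R` be a local ring with infinite residue field and `A` an abelian group.
Any function `f : Rˣ → A` satisfying `f a + f b = f (a + b)` whenever `a`, `b` and `a + b` are
all units extends to a unique `ℤ`-linear (additive) function `R → A`. -/
theorem exists_unique_addHom_extension {R A : Type*} [CommRing R] [IsLocalRing R]
    [Infinite (IsLocalRing.ResidueField R)] [AddCommGroup A] (f : Rˣ → A)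
    (hf : ∀ a b c : Rˣ, (a : R) + (b : R) = (c : R) → f a + f b = f c) :
    ∃! g : R →+ A, ∀ u : Rˣ, g (u : R) = f u := by
  classical
  have hrep : ∀ x : R, ∃ u v : Rˣ, (u : R) + v = x := by
    intro x
    obtain ⟨s, hs, hs'⟩ := aux_avoid ({x} : Finset R)
    exact ⟨hs.unit, ((hs' x (by simp)).neg).unit,
      by simp only [IsUnit.unit_spec]; ring⟩
  choose U V hUV using hrep
  have hG0 : ∀ (x : R) (a b : Rˣ), (a : R) + b = x → f (U x) + f (V x) = f a + f b :=
    fun x a b hab => aux_welldef f hf (U x) (V x) a b (by rw [hUV x, hab])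
  have hadd : ∀ x y : R, f (U (x + y)) + f (V (x + y))
      = (f (U x) + f (V x)) + (f (U y) + f (V y)) := by
    intro x y
    obtain ⟨s, hs, hs'⟩ := aux_avoid
      ({(V x : R) + (U y), -(U x : R), (V x : R) + (U y) + (V y)} : Finset R)
    have hd : IsUnit ((V x : R) + (U y) - s) := by
      have := (hs' ((V x : R) + (U y)) (by simp)).neg
      rwa [neg_sub] at this
    have ha : IsUnit (s + (U x : R)) := by
      have := hs' (-(U x : R)) (by simp)
      rwa [sub_neg_eq_add] at this
    have hb : IsUnit (((V x : R) + (U y) - s) + (V y : R)) := by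
      have := (hs' ((V x : R) + (U y) + (V y)) (by simp)).neg
      rw [neg_sub] at this
      convert this using 1
      ring
    have e1 : f hs.unit + f hd.unit = f (V x) + f (U y) :=
      aux_welldef f hf _ _ _ _ (by simp only [IsUnit.unit_spec]; ring)
    have e2 : f (U x) + f hs.unit = f ha.unit :=
      hf _ _ _ (by simp only [IsUnit.unit_spec]; ring)
    have e3 : f hd.unit + f (V y) = f hb.unit :=
      hf _ _ _ (by simp only [IsUnit.unit_spec])
    have e4 : f (U (x + y)) + f (V (x + y)) = f ha.unit + f hb.unit := by
      apply hG0
      simp only [IsUnit.unit_spec]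
      linear_combination hUV x + hUV y
    rw [e4, ← e2, ← e3,
      show f (U x) + f hs.unit + (f hd.unit + f (V y))
        = f (U x) + (f hs.unit + f hd.unit) + f (V y) from by abel, e1]
    abel
  refine ⟨AddMonoidHom.mk' (fun x => f (U x) + f (V x)) hadd, ?_, ?_⟩
  · intro u
    exact hf (U (u : R)) (V (u : R)) u (hUV _)
  · intro g' hg'
    ext x
    have : g' x = g' (U x : R) + g' (V x : R) := by rw [← map_add, hUV x]
    rw [this, hg', hg']
    rfl
end

section
/- Let R be a local ring with infinite residue field. The set of elements of the form 1/u₁ + 1/u₂ + 1/u₃, where u₁, u₂, u₃ are units of R with u₁ + u₂ + u₃ = 0, generates R as an abelian group. -/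
open IsLocalRing Polynomial

private lemma unitsVal_mem_aux {R : Type*} [CommRing R] [IsLocalRing R]
    [Infinite (IsLocalRing.ResidueField R)] (w : Rˣ) :
    (w : R) ∈ {x : R | ∃ u₁ u₂ u₃ : Rˣ, (u₁ : R) + (u₂ : R) + (u₃ : R) = 0 ∧
      x = (↑u₁⁻¹ : R) + (↑u₂⁻¹ : R) + (↑u₃⁻¹ : R)} := by
  -- find a residue avoiding roots of X(X+1)(X²+X+1)
  obtain ⟨α, hα⟩ : ∃ α : ResidueField R,
      ((X * (X + 1) * (X ^ 2 + X + 1)) : (ResidueField R)[X]).eval α ≠ 0 := by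
    apply Polynomial.exists_eval_ne_zero_of_natDegree_lt_card
    · have hm : ((X * (X + 1) * (X ^ 2 + X + 1)) : (ResidueField R)[X]).Monic := by
        monicity!
      exact hm.ne_zero
    · exact lt_of_lt_of_le (Cardinal.nat_lt_aleph0 _)
        (Cardinal.infinite_iff.mp inferInstance)
  simp only [eval_mul, eval_add, eval_pow, eval_X, eval_one, mul_ne_zero_iff] at hα
  obtain ⟨⟨hα1, hα2⟩, hα3⟩ := hα
  obtain ⟨t₀, ht₀⟩ := IsLocalRing.residue_surjective (R := R) α
  have h1 : IsUnit t₀ := by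
    rw [← IsLocalRing.residue_ne_zero_iff_isUnit, ht₀]; exact hα1
  have h2 : IsUnit (1 + t₀) := by
    rw [← IsLocalRing.residue_ne_zero_iff_isUnit, map_add, map_one, ht₀]
    simpa [add_comm] using hα2
  have h3 : IsUnit (t₀ ^ 2 + t₀ + 1) := by
    rw [← IsLocalRing.residue_ne_zero_iff_isUnit, map_add, map_add, map_pow, map_one, ht₀]
    exact hα3
  set t : Rˣ := h1.unit with htdef
  set v : Rˣ := h2.unit with hvdef
  set g : Rˣ := h3.unit with hgdef
  have ht : (t : R) = t₀ := rfl
  have hv : (v : R) = 1 + t₀ := rfl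
  have hg : (g : R) = t₀ ^ 2 + t₀ + 1 := rfl
  refine ⟨g * v⁻¹ * w⁻¹, g * t⁻¹ * v⁻¹ * w⁻¹, -(g * t⁻¹ * w⁻¹), ?_, ?_⟩
  · have htv : t₀ * (↑t⁻¹ : R) = 1 := by rw [← ht]; exact t.mul_inv
    have hvv : (1 + t₀) * (↑v⁻¹ : R) = 1 := by rw [← hv]; exact v.mul_inv
    simp only [Units.val_mul, Units.val_neg, hg]
    linear_combination (-( (t₀^2+t₀+1) * (↑w⁻¹ : R) * (↑v⁻¹ : R))) * htv +
      ((t₀^2+t₀+1) * (↑w⁻¹ : R) * (↑t⁻¹ : R)) * hvv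
  · have hgv : (t₀ ^ 2 + t₀ + 1) * (↑g⁻¹ : R) = 1 := by rw [← hg]; exact g.mul_inv
    simp only [mul_inv_rev, inv_neg, inv_inv, Units.val_mul, Units.val_neg, ht, hv]
    linear_combination (-((w : R))) * hgv

/-- Let `R` be a local ring with infinite residue field.  The set of elements of
the form `1/u₁ + 1/u₂ + 1/u₃`, where `u₁, u₂, u₃` are units of `R` with `u₁ + u₂ + u₃ = 0`,
generates `R` as an abelian group. -/
theorem addSubgroup_closure_inverses_eq_top {R : Type*} [CommRing R] [IsLocalRing R]
    [Infinite (IsLocalRing.ResidueField R)] :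
    AddSubgroup.closure {x : R | ∃ u₁ u₂ u₃ : Rˣ, (u₁ : R) + (u₂ : R) + (u₃ : R) = 0 ∧
      x = (↑u₁⁻¹ : R) + (↑u₂⁻¹ : R) + (↑u₃⁻¹ : R)} = ⊤ := by
  rw [eq_top_iff]
  intro x _
  have hu : ∀ w : Rˣ, (w : R) ∈ AddSubgroup.closure {x : R | ∃ u₁ u₂ u₃ : Rˣ,
      (u₁ : R) + (u₂ : R) + (u₃ : R) = 0 ∧
      x = (↑u₁⁻¹ : R) + (↑u₂⁻¹ : R) + (↑u₃⁻¹ : R)} :=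
    fun w => AddSubgroup.subset_closure (unitsVal_mem_aux w)
  rcases IsLocalRing.isUnit_or_isUnit_one_sub_self x with h | h
  · simpa [h.unit_spec] using hu h.unit
  · have h1 : (1 : R) ∈ AddSubgroup.closure {x : R | ∃ u₁ u₂ u₃ : Rˣ,
        (u₁ : R) + (u₂ : R) + (u₃ : R) = 0 ∧
        x = (↑u₁⁻¹ : R) + (↑u₂⁻¹ : R) + (↑u₃⁻¹ : R)} := by simpa using hu 1
    have h2 := hu h.unit
    rw [h.unit_spec] at h2
    have := AddSubgroup.sub_mem _ h1 h2
    simpa using this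
end

section
/- Let R be a local ring with infinite residue field and a ∈ R* a unit. Then the additive subgroup of R generated by the elements a²/c − c, as c ranges over the units of R, equals all of R. Equivalently, the map Z[R*] → R defined on generators by c ↦ a²/c − c is surjective. -/
open IsLocalRing Polynomial

section Aux
variable {R : Type*} [CommRing R] [IsLocalRing R] [Infinite (IsLocalRing.ResidueField R)]

private lemma aux_exists_good (bad : Set (ResidueField R)) (hbad : bad.Finite) :
    ∃ x : R, residue R x ∉ bad := by
  obtain ⟨t, ht⟩ := hbad.infinite_compl.nonempty
  obtain ⟨x, rfl⟩ := residue_surjective (R := R) t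
  exact ⟨x, ht⟩

private lemma aux_exists_alpha :
    ∃ α : R, IsUnit α ∧ IsUnit (α - 1) ∧ IsUnit (α ^ 2 - α + 1) := by
  classical
  have hp : (X ^ 2 - X + 1 : (ResidueField R)[X]) ≠ 0 := by
    intro h
    have := congrArg (fun p => Polynomial.eval 0 p) h
    simp at this
  have hfin : ({0, 1} ∪ { x : ResidueField R | (X ^ 2 - X + 1 : (ResidueField R)[X]).IsRoot x }).Finite :=
    Set.Finite.union (by simp) (finite_setOf_isRoot hp)
  obtain ⟨α, hα⟩ := aux_exists_good _ hfin
  simp only [Set.mem_union, Set.mem_insert_iff, Set.mem_singleton_iff, Set.mem_setOf_eq,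
    not_or, IsRoot.def] at hα
  obtain ⟨⟨h0, h1⟩, h2⟩ := hα
  refine ⟨α, ?_, ?_, ?_⟩
  · exact (residue_ne_zero_iff_isUnit _).mp h0
  · refine (residue_ne_zero_iff_isUnit _).mp ?_
    rw [map_sub, map_one, sub_ne_zero]
    exact h1
  · refine (residue_ne_zero_iff_isUnit _).mp ?_
    intro h
    apply h2
    simpa using h

end Aux

/-- Let `R` be a local ring with infinite residue field and `a ∈ R*` a unit.
Then the additive subgroup of `R` generated by the elements `a²/c − c`, as `c` ranges over the
units of `R`, equals all of `R` (equivalently, the map `ℤ[R*] → R`, `c ↦ a²/c − c`, defined on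
generators, is surjective). -/
theorem addSubgroup_closure_sq_div_sub_eq_top {R : Type*} [CommRing R] [IsLocalRing R]
    [Infinite (IsLocalRing.ResidueField R)] (a : Rˣ) :
    AddSubgroup.closure {x : R | ∃ c : Rˣ, x = (a : R) ^ 2 * (↑c⁻¹ : R) - (c : R)} = ⊤ := by
  set S := {x : R | ∃ c : Rˣ, x = (a : R) ^ 2 * (↑c⁻¹ : R) - (c : R)} with hS
  -- key: for every unit ρ, a * ρ ∈ closure S
  have key : ∀ ρ : Rˣ, ((a : R) * ρ) ∈ AddSubgroup.closure S := by
    intro ρ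
    obtain ⟨α, hA, hE, hB⟩ := aux_exists_alpha (R := R)
    set A := hA.unit with hAdef
    set E := hE.unit with hEdef
    set B := hB.unit with hBdef
    have hAv : (A : R) = α := rfl
    have hEv : (E : R) = α - 1 := rfl
    have hBv : (B : R) = α ^ 2 - α + 1 := rfl
    set Xu : Rˣ := a * -(ρ * E * B⁻¹) with hXu
    set Yu : Rˣ := a * (A * -(ρ * E * B⁻¹)) with hYu
    set Zu : Rˣ := a * -(ρ * A * B⁻¹) with hZu
    have m1 : ((a : R) ^ 2 * (↑Xu⁻¹ : R) - (Xu : R)) ∈ AddSubgroup.closure S :=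
      AddSubgroup.subset_closure ⟨Xu, rfl⟩
    have m2 : ((a : R) ^ 2 * (↑Yu⁻¹ : R) - (Yu : R)) ∈ AddSubgroup.closure S :=
      AddSubgroup.subset_closure ⟨Yu, rfl⟩
    have m3 : ((a : R) ^ 2 * (↑Zu⁻¹ : R) - (Zu : R)) ∈ AddSubgroup.closure S :=
      AddSubgroup.subset_closure ⟨Zu, rfl⟩
    have heq : ((a : R) * ρ) =
        -((a : R) ^ 2 * (↑Xu⁻¹ : R) - (Xu : R)) + ((a : R) ^ 2 * (↑Yu⁻¹ : R) - (Yu : R))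
          + ((a : R) ^ 2 * (↑Zu⁻¹ : R) - (Zu : R)) := by
      have hAs : (A : R) = α := hA.unit_spec
      have hEs : (E : R) = α - 1 := hE.unit_spec
      have hBs : (B : R) = α ^ 2 - α + 1 := hB.unit_spec
      have hAi : (α : R) * (↑A⁻¹ : R) = 1 := by rw [← hAs]; exact A.mul_inv
      have hEi : (α - 1) * (↑E⁻¹ : R) = 1 := by rw [← hEs]; exact E.mul_inv
      have hBi : (α ^ 2 - α + 1) * (↑B⁻¹ : R) = 1 := by rw [← hBs]; exact B.mul_inv
      simp only [hXu, hYu, hZu, mul_inv_rev, inv_neg, inv_inv, Units.val_mul, Units.val_neg]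
      rw [hAs, hEs, hBs]
      linear_combination (-(a : R) * (ρ : R)) * hBi +
        (-((a : R) ^ 2 * (↑a⁻¹ : R) * (↑A⁻¹ : R) * (α ^ 2 - α + 1) * (↑ρ⁻¹ : R))) * hEi +
        ((a : R) ^ 2 * (↑a⁻¹ : R) * (↑E⁻¹ : R) * (α ^ 2 - α + 1) * (↑ρ⁻¹ : R)) * hAi
    rw [heq]
    exact add_mem (add_mem (neg_mem m1) m2) m3
  -- now conclude
  rw [AddSubgroup.eq_top_iff']
  intro r
  obtain ⟨u, hu⟩ : ∃ u : Rˣ, IsUnit ((↑a⁻¹ : R) * r - (u : R)) := by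
    obtain ⟨x, hx⟩ := aux_exists_good (R := R) {0, residue R ((↑a⁻¹ : R) * r)} ((Set.finite_singleton _).insert _)
    simp only [Set.mem_insert_iff, Set.mem_singleton_iff, not_or] at hx
    refine ⟨((residue_ne_zero_iff_isUnit _).mp hx.1).unit, ?_⟩
    refine (residue_ne_zero_iff_isUnit _).mp ?_
    rw [map_sub, sub_ne_zero]
    intro h
    rw [((residue_ne_zero_iff_isUnit _).mp hx.1).unit_spec] at h
    exact hx.2 h.symm
  have hrep : r = (a : R) * u + (a : R) * hu.unit := by
    have ha : (a : R) * (↑a⁻¹ : R) = 1 := a.mul_inv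
    have : (hu.unit : R) = (↑a⁻¹ : R) * r - (u : R) := hu.unit_spec
    rw [this]
    linear_combination (-r) * ha
  rw [hrep]
  exact add_mem (key u) (key hu.unit)
end

section
/- Let R be a local ring with infinite residue field and b ∈ R* a unit. Then the additive subgroup of R generated by the elements c²/b³ + 1/c, as c ranges over the units of R, equals all of R. -/
set_option maxHeartbeats 1000000
open Polynomial in
lemma exists_good_delta {K : Type*} [Field K] [Infinite K]
    (t s h : K) (ht : t ≠ 0) (hs : s ≠ 0) (hh : h ≠ 0) (hth : t + h ≠ 0) (hsh : s + h ≠ 0)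
    (hts : t - s ≠ 0) (htsh : t + s + h ≠ 0) :
    ∃ x : K, t + x ≠ 0 ∧ s + x ≠ 0 ∧ t + h + x ≠ 0 ∧ s + h + x ≠ 0 ∧
      (t+h)⁻¹ - t⁻¹ - (s+h)⁻¹ + s⁻¹ - (t+h+x)⁻¹ + (t+x)⁻¹ + (s+h+x)⁻¹ - (s+x)⁻¹ ≠ 0 := by
  set QQ : K[X] := (X + C t) * (X + C s) * (X + C (t+h)) * (X + C (s+h)) with hQQ
  have hQm : QQ.Monic :=
    (((monic_X_add_C t).mul (monic_X_add_C s)).mul (monic_X_add_C (t+h))).mul (monic_X_add_C (s+h))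
  have hQd : QQ.natDegree = 4 := by
    rw [hQQ]
    compute_degree!
  set NN : K[X] := C (t+s+h) * QQ - (C (t+s+h) + C 2 * X) * C (t*s*(t+h)*(s+h)) with hNN
  have hNN4 : NN.coeff 4 = t + s + h := by
    have h1 : QQ.coeff 4 = 1 := by rw [← hQd]; exact hQm.coeff_natDegree
    have h2 : ((C (t+s+h) + C 2 * X) * C (t*s*(t+h)*(s+h))).natDegree ≤ 1 := by compute_degree
    rw [hNN, coeff_sub, coeff_C_mul, h1, coeff_eq_zero_of_natDegree_lt (lt_of_le_of_lt h2 (by norm_num))]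
    ring
  have hNN0 : NN ≠ 0 := fun h0 => htsh (by rw [h0] at hNN4; simpa using hNN4.symm)
  obtain ⟨x, hx⟩ : ∃ x, (NN * QQ).eval x ≠ 0 := by
    by_contra hc
    push_neg at hc
    exact mul_ne_zero hNN0 hQm.ne_zero (zero_of_eval_zero _ hc)
  rw [eval_mul] at hx
  have hNx : NN.eval x ≠ 0 := fun h0 => hx (by simp [h0])
  have hQx : QQ.eval x ≠ 0 := fun h0 => hx (by simp [h0])
  have hQev : QQ.eval x = (x + t) * (x + s) * (x + (t+h)) * (x + (s+h)) := by
    simp [hQQ]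
  rw [hQev] at hQx
  have h1 : t + x ≠ 0 := fun h0 => hQx (by rw [show x + t = t + x by ring, h0]; ring)
  have h2 : s + x ≠ 0 := fun h0 => hQx (by rw [show x + s = s + x by ring, h0]; ring)
  have h3 : t + h + x ≠ 0 := fun h0 => hQx (by rw [show x + (t+h) = t + h + x by ring, h0]; ring)
  have h4 : s + h + x ≠ 0 := fun h0 => hQx (by rw [show x + (s+h) = s + h + x by ring, h0]; ring)
  have hNev : NN.eval x = (t+s+h) * ((x + t) * (x + s) * (x + (t+h)) * (x + (s+h)))
      - (t+s+h+2*x) * (t*s*(t+h)*(s+h)) := by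
    simp [hNN, hQQ]
  have hD : t*s*(t+h)*(s+h)*(t+x)*(s+x)*(t+h+x)*(s+h+x) ≠ 0 :=
    mul_ne_zero (mul_ne_zero (mul_ne_zero (mul_ne_zero (mul_ne_zero (mul_ne_zero
      (mul_ne_zero ht hs) hth) hsh) h1) h2) h3) h4
  have iA : (t+h) * (t+h)⁻¹ = 1 := mul_inv_cancel₀ hth
  have iB : t * t⁻¹ = 1 := mul_inv_cancel₀ ht
  have iC : (s+h) * (s+h)⁻¹ = 1 := mul_inv_cancel₀ hsh
  have iD : s * s⁻¹ = 1 := mul_inv_cancel₀ hs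
  have iE : (t+h+x) * (t+h+x)⁻¹ = 1 := mul_inv_cancel₀ h3
  have iF : (t+x) * (t+x)⁻¹ = 1 := mul_inv_cancel₀ h1
  have iG : (s+h+x) * (s+h+x)⁻¹ = 1 := mul_inv_cancel₀ h4
  have iH : (s+x) * (s+x)⁻¹ = 1 := mul_inv_cancel₀ h2
  have hkey : (t+h)⁻¹ - t⁻¹ - (s+h)⁻¹ + s⁻¹ - (t+h+x)⁻¹ + (t+x)⁻¹ + (s+h+x)⁻¹ - (s+x)⁻¹
      = h * (t - s) * NN.eval x / (t*s*(t+h)*(s+h)*(t+x)*(s+x)*(t+h+x)*(s+h+x)) := by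
    rw [hNev, eq_div_iff hD]
    linear_combination (t*s*(s+h)*(t+x)*(s+x)*(t+h+x)*(s+h+x)) * iA
      - (s*(t+h)*(s+h)*(t+x)*(s+x)*(t+h+x)*(s+h+x)) * iB
      - (t*s*(t+h)*(t+x)*(s+x)*(t+h+x)*(s+h+x)) * iC
      + (t*(t+h)*(s+h)*(t+x)*(s+x)*(t+h+x)*(s+h+x)) * iD
      - (t*s*(t+h)*(s+h)*(t+x)*(s+x)*(s+h+x)) * iE
      + (t*s*(t+h)*(s+h)*(s+x)*(t+h+x)*(s+h+x)) * iF
      + (t*s*(t+h)*(s+h)*(t+x)*(s+x)*(t+h+x)) * iG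
      - (t*s*(t+h)*(s+h)*(t+x)*(t+h+x)*(s+h+x)) * iH
  refine ⟨x, h1, h2, h3, h4, ?_⟩
  rw [hkey]
  exact div_ne_zero (mul_ne_zero (mul_ne_zero hh hts) hNx) hD

open IsLocalRing in
/-- Let `R` be a local ring with infinite residue field and `b ∈ R*` a unit.
Then the additive subgroup of `R` generated by the elements `c²/b³ + 1/c`, as `c` ranges over
the units of `R`, equals all of `R`. -/
theorem addSubgroup_closure_sq_div_cube_add_inv_eq_top {R : Type*} [CommRing R] [IsLocalRing R]
    [Infinite (IsLocalRing.ResidueField R)] (b : Rˣ) :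
    AddSubgroup.closure {x : R | ∃ c : Rˣ, x = (c : R) ^ 2 * (↑b⁻¹ : R) ^ 3 + (↑c⁻¹ : R)} = ⊤ := by
  classical
  set S := AddSubgroup.closure {x : R | ∃ c : Rˣ, x = (c : R) ^ 2 * (↑b⁻¹ : R) ^ 3 + (↑c⁻¹ : R)}
    with hSdef
  rw [AddSubgroup.eq_top_iff']
  intro r
  have hgen : ∀ c : Rˣ, (c : R) ^ 2 * (↑b⁻¹ : R) ^ 3 + (↑c⁻¹ : R) ∈ S :=
    fun c => AddSubgroup.subset_closure ⟨c, rfl⟩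
  have memA : ∀ c₁ c₂ c₃ c₄ d₁ d₂ d₃ d₄ : Rˣ,
      (c₁:R)^2 + (c₄:R)^2 + (d₂:R)^2 + (d₃:R)^2 = (c₂:R)^2 + (c₃:R)^2 + (d₁:R)^2 + (d₄:R)^2 →
      ((↑c₁⁻¹:R) - ↑c₂⁻¹ - ↑c₃⁻¹ + ↑c₄⁻¹ - ↑d₁⁻¹ + ↑d₂⁻¹ + ↑d₃⁻¹ - ↑d₄⁻¹) ∈ S := by
    intro c₁ c₂ c₃ c₄ d₁ d₂ d₃ d₄ hsq
    have key : (↑c₁⁻¹:R) - ↑c₂⁻¹ - ↑c₃⁻¹ + ↑c₄⁻¹ - ↑d₁⁻¹ + ↑d₂⁻¹ + ↑d₃⁻¹ - ↑d₄⁻¹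
        = ((c₁:R)^2 * (↑b⁻¹:R)^3 + ↑c₁⁻¹) - ((c₂:R)^2 * (↑b⁻¹:R)^3 + ↑c₂⁻¹)
          - ((c₃:R)^2 * (↑b⁻¹:R)^3 + ↑c₃⁻¹) + ((c₄:R)^2 * (↑b⁻¹:R)^3 + ↑c₄⁻¹)
          - ((d₁:R)^2 * (↑b⁻¹:R)^3 + ↑d₁⁻¹) + ((d₂:R)^2 * (↑b⁻¹:R)^3 + ↑d₂⁻¹)
          + ((d₃:R)^2 * (↑b⁻¹:R)^3 + ↑d₃⁻¹) - ((d₄:R)^2 * (↑b⁻¹:R)^3 + ↑d₄⁻¹) := by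
      linear_combination (-(↑b⁻¹:R)^3) * hsq
    rw [key]
    exact sub_mem (add_mem (add_mem (sub_mem (add_mem (sub_mem (sub_mem (hgen c₁) (hgen c₂))
      (hgen c₃)) (hgen c₄)) (hgen d₁)) (hgen d₂)) (hgen d₃)) (hgen d₄)
  -- choose residues
  obtain ⟨T, hT⟩ := Infinite.exists_notMem_finset ({0} : Finset (ResidueField R))
  have hT0 : T ≠ 0 := by simpa using hT
  obtain ⟨H, hHm⟩ := Infinite.exists_notMem_finset ({0, -T} : Finset (ResidueField R))
  simp only [Finset.mem_insert, Finset.mem_singleton] at hHm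
  push_neg at hHm
  obtain ⟨hH0, hHT⟩ := hHm
  obtain ⟨Sv, hSm⟩ := Infinite.exists_notMem_finset ({0, T, -H, -T-H} : Finset (ResidueField R))
  simp only [Finset.mem_insert, Finset.mem_singleton] at hSm
  push_neg at hSm
  obtain ⟨hS0, hST, hSH, hSTH⟩ := hSm
  obtain ⟨x, hx1, hx2, hx3, hx4, hxe⟩ := exists_good_delta T Sv H hT0 hS0 hH0
    (fun h0 => hHT (by linear_combination h0))
    (fun h0 => hSH (by linear_combination h0))
    (fun h0 => hST (by linear_combination -h0))
    (fun h0 => hSTH (by linear_combination h0))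
  -- lift to R
  obtain ⟨t, htT⟩ := residue_surjective (R := R) T
  obtain ⟨s, hsS⟩ := residue_surjective (R := R) Sv
  obtain ⟨h, hhH⟩ := residue_surjective (R := R) H
  obtain ⟨d, hdx⟩ := residue_surjective (R := R) x
  -- residues of the eight elements
  have r1 : residue R (t+h) = T + H := by rw [map_add, htT, hhH]
  have r2 : residue R t = T := htT
  have r3 : residue R (s+h) = Sv + H := by rw [map_add, hsS, hhH]
  have r4 : residue R s = Sv := hsS
  have r5 : residue R (t+h+d) = T + H + x := by rw [map_add, map_add, htT, hhH, hdx]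
  have r6 : residue R (t+d) = T + x := by rw [map_add, htT, hdx]
  have r7 : residue R (s+h+d) = Sv + H + x := by rw [map_add, map_add, hsS, hhH, hdx]
  have r8 : residue R (s+d) = Sv + x := by rw [map_add, hsS, hdx]
  have U1 : IsUnit (t+h) := (residue_ne_zero_iff_isUnit _).mp
    (by rw [r1]; exact fun h0 => hHT (by linear_combination h0))
  have U2 : IsUnit t := (residue_ne_zero_iff_isUnit _).mp (by rw [r2]; exact hT0)
  have U3 : IsUnit (s+h) := (residue_ne_zero_iff_isUnit _).mp
    (by rw [r3]; exact fun h0 => hSH (by linear_combination h0))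
  have U4 : IsUnit s := (residue_ne_zero_iff_isUnit _).mp (by rw [r4]; exact hS0)
  have U5 : IsUnit (t+h+d) := (residue_ne_zero_iff_isUnit _).mp (by rw [r5]; exact hx3)
  have U6 : IsUnit (t+d) := (residue_ne_zero_iff_isUnit _).mp (by rw [r6]; exact hx1)
  have U7 : IsUnit (s+h+d) := (residue_ne_zero_iff_isUnit _).mp (by rw [r7]; exact hx4)
  have U8 : IsUnit (s+d) := (residue_ne_zero_iff_isUnit _).mp (by rw [r8]; exact hx2)
  set E : R := ↑U1.unit⁻¹ - ↑U2.unit⁻¹ - ↑U3.unit⁻¹ + ↑U4.unit⁻¹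
    - ↑U5.unit⁻¹ + ↑U6.unit⁻¹ + ↑U7.unit⁻¹ - ↑U8.unit⁻¹ with hE
  -- the key membership: E * u⁻¹ ∈ S for every unit u
  have hV : ∀ u : Rˣ, (↑u⁻¹ : R) * E ∈ S := by
    intro u
    have hm := memA (u * U1.unit) (u * U2.unit) (u * U3.unit) (u * U4.unit)
      (u * U5.unit) (u * U6.unit) (u * U7.unit) (u * U8.unit)
      (by simp only [Units.val_mul, IsUnit.unit_spec]; ring)
    have heq : (↑(u * U1.unit)⁻¹ : R) - ↑(u * U2.unit)⁻¹ - ↑(u * U3.unit)⁻¹ + ↑(u * U4.unit)⁻¹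
        - ↑(u * U5.unit)⁻¹ + ↑(u * U6.unit)⁻¹ + ↑(u * U7.unit)⁻¹ - ↑(u * U8.unit)⁻¹
        = (↑u⁻¹ : R) * E := by
      simp only [mul_inv_rev, Units.val_mul, hE]
      ring
    rwa [heq] at hm
  -- E is a unit
  have hresinv : ∀ (a : R) (ha : IsUnit a), residue R (↑ha.unit⁻¹ : R) = (residue R a)⁻¹ := by
    intro a ha
    have h1 : residue R (↑ha.unit⁻¹ : R) * residue R a = 1 := by
      rw [← map_mul, ha.val_inv_mul, map_one]
    exact eq_inv_of_mul_eq_one_left h1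
  have hEres : residue R E = (T+H)⁻¹ - T⁻¹ - (Sv+H)⁻¹ + Sv⁻¹ - (T+H+x)⁻¹ + (T+x)⁻¹
      + (Sv+H+x)⁻¹ - (Sv+x)⁻¹ := by
    rw [hE]
    simp only [map_add, map_sub, hresinv _ U1, hresinv _ U2, hresinv _ U3, hresinv _ U4,
      hresinv _ U5, hresinv _ U6, hresinv _ U7, hresinv _ U8, r1, r2, r3, r4, r5, r6, r7, r8]
  have hEu : IsUnit E := (residue_ne_zero_iff_isUnit _).mp (by rw [hEres]; exact hxe)
  -- endgame
  set z : R := (↑hEu.unit⁻¹ : R) * r with hz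
  obtain ⟨M, hM⟩ := Infinite.exists_notMem_finset
    ({0, (residue R z)⁻¹} : Finset (ResidueField R))
  simp only [Finset.mem_insert, Finset.mem_singleton] at hM
  push_neg at hM
  obtain ⟨hM0, hM1⟩ := hM
  obtain ⟨m, hmM⟩ := residue_surjective (R := R) M
  have hUm : IsUnit m := (residue_ne_zero_iff_isUnit _).mp (by rw [hmM]; exact hM0)
  have hUρ : IsUnit (1 - z * m) := by
    apply (residue_ne_zero_iff_isUnit _).mp
    rw [map_sub, map_one, map_mul, hmM]
    intro h0
    have hzM : residue R z * M = 1 := by linear_combination -h0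
    exact hM1 (eq_inv_of_mul_eq_one_right (by linear_combination hzM))
  have h1 := hV hUm.unit
  have h2 := hV (hUm.unit * hUρ.unit⁻¹)
  have hfin : r = (↑hUm.unit⁻¹ : R) * E - (↑(hUm.unit * hUρ.unit⁻¹)⁻¹ : R) * E := by
    have hν : (↑(hUm.unit * hUρ.unit⁻¹)⁻¹ : R) = (1 - z * m) * ↑hUm.unit⁻¹ := by
      simp only [mul_inv_rev, inv_inv, Units.val_mul, IsUnit.unit_spec]
    rw [hν, hz]
    have hminv : (↑hUm.unit⁻¹ : R) * m = 1 := hUm.val_inv_mul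
    have heinv : (↑hEu.unit⁻¹ : R) * E = 1 := hEu.val_inv_mul
    linear_combination (-(↑hEu.unit⁻¹ : R) * r * E) * hminv + (- r) * heinv
  rw [hfin]
  exact sub_mem h1 h2
end

section
/- Let k be a field, and let v = (v₁,...,v_q) be a non-degenerate unimodular sequence in the standard symplectic space k^{2n} (n ≥ 1). Then there exist finitely many proper linear subspaces V₁,...,V_s ⊊ k^{2n}, each of dimension < 2n, such that every x ∈ k^{2n} \ (V₁ ∪ ... ∪ V_s) is in good position with respect to v, i.e., (v₁,...,v_q,x) is again a non-degenerate unimodular sequence. -/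
/-- The standard symplectic (Gram) matrix `ψ`, a block sum of `(0 1; -1 0)` blocks. -/
def psiM (k : Type) [CommRing k] (s : ℕ) : Matrix (Fin s) (Fin s) k :=
  Matrix.of fun i j =>
    if (i : ℕ) + 1 = (j : ℕ) ∧ (i : ℕ) % 2 = 0 then 1
    else if (j : ℕ) + 1 = (i : ℕ) ∧ (j : ℕ) % 2 = 0 then -1 else 0

/-- The standard symplectic form `⟨x, y⟩ = xᵀ ψ y` on `k^{2n}`. -/
def symplForm (k : Type) [CommRing k] (n : ℕ) (x y : Fin (2 * n) → k) : k :=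
  dotProduct x ((psiM k (2 * n)).mulVec y)

/-- A sequence of vectors of `k^{2n}` (over a field `k`) is a *non-degenerate unimodular
sequence* if every subsequence of length `r ≤ min q 2n` is linearly independent and every
subsequence of nonzero even length `r ≤ min q 2n` has invertible Gram matrix (so spans a
non-degenerate subspace of the symplectic space). -/
def IsNondegUnimodSeqField (k : Type) [Field k] (n q : ℕ) (v : Fin q → Fin (2 * n) → k) :
    Prop :=
  (∀ (r : ℕ) (f : Fin r → Fin q), r ≤ min q (2 * n) → StrictMono f →
    LinearIndependent k fun a => v (f a)) ∧
  (∀ (r : ℕ) (f : Fin r → Fin q), 0 < r → Even r → r ≤ min q (2 * n) → StrictMono f →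
    IsUnit (Matrix.det (Matrix.of fun a b : Fin r => symplForm k n (v (f a)) (v (f b)))))

open Matrix

def NM (k : Type) [CommRing k] (s : ℕ) : Matrix (Fin s) (Fin s) k :=
  Matrix.of fun i j => if (i : ℕ) + 1 = (j : ℕ) ∧ (i : ℕ) % 2 = 0 then 1 else 0

lemma psiM_eq (k : Type) [CommRing k] (s : ℕ) : psiM k s = NM k s - (NM k s)ᵀ := by
  ext i j
  simp only [psiM, NM, Matrix.sub_apply, Matrix.transpose_apply, Matrix.of_apply]
  split_ifs with h1 h2 h2 <;> first | (exfalso; omega) | ring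

lemma psiM_transpose (k : Type) [CommRing k] (s : ℕ) : (psiM k s)ᵀ = -psiM k s := by
  rw [psiM_eq, Matrix.transpose_sub, Matrix.transpose_transpose, neg_sub]

lemma symplForm_self (k : Type) [CommRing k] (n : ℕ) (x : Fin (2*n) → k) :
    symplForm k n x x = 0 := by
  rw [symplForm, psiM_eq, Matrix.sub_mulVec, dotProduct_sub,
    Matrix.dotProduct_mulVec x ((NM k (2*n))ᵀ), Matrix.vecMul_transpose,
    dotProduct_comm]
  exact sub_self _

lemma symplForm_comm (k : Type) [CommRing k] (n : ℕ) (x y : Fin (2*n) → k) :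
    symplForm k n y x = - symplForm k n x y := by
  rw [symplForm, Matrix.dotProduct_mulVec y, ← Matrix.mulVec_transpose, psiM_transpose,
    Matrix.neg_mulVec, neg_dotProduct, dotProduct_comm, symplForm]

lemma psiM_apply (k : Type) [CommRing k] (s : ℕ) (i j : Fin s) : psiM k s i j =
    (if (i : ℕ) + 1 = (j : ℕ) ∧ (i : ℕ) % 2 = 0 then (1:k)
    else if (j : ℕ) + 1 = (i : ℕ) ∧ (j : ℕ) % 2 = 0 then -1 else 0) := rfl

lemma psiM_mul_transpose (k : Type) [CommRing k] (n : ℕ) :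
    psiM k (2*n) * (psiM k (2*n))ᵀ = 1 := by
  ext i l
  rw [Matrix.mul_apply]
  simp only [Matrix.transpose_apply]
  rcases Nat.even_or_odd (i : ℕ) with he | ho
  · have he' : (i : ℕ) % 2 = 0 := Nat.even_iff.mp he
    have hlt : (i : ℕ) + 1 < 2 * n := by have := i.isLt; omega
    set j₀ : Fin (2*n) := ⟨(i:ℕ)+1, hlt⟩ with hj₀
    have h1 : ∀ j, psiM k (2*n) i j = if j = j₀ then 1 else 0 := by
      intro j
      rw [psiM_apply]
      simp only [Fin.ext_iff, hj₀]
      split_ifs <;> first | rfl | (exfalso; omega)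
    simp only [h1, ite_mul, one_mul, zero_mul]
    rw [Finset.sum_ite_eq' Finset.univ j₀ (fun j => psiM k (2*n) l j),
      if_pos (Finset.mem_univ _), psiM_apply, Matrix.one_apply]
    simp only [Fin.ext_iff, hj₀]
    split_ifs <;> first | rfl | (exfalso; omega)
  · have ho' : (i : ℕ) % 2 = 1 := Nat.odd_iff.mp ho
    have hlt : (i : ℕ) - 1 < 2 * n := by have := i.isLt; omega
    set j₀ : Fin (2*n) := ⟨(i:ℕ)-1, hlt⟩ with hj₀
    have h1 : ∀ j, psiM k (2*n) i j = if j = j₀ then -1 else 0 := by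
      intro j
      rw [psiM_apply]
      simp only [Fin.ext_iff, hj₀]
      split_ifs <;> first | rfl | (exfalso; omega)
    simp only [h1, ite_mul, neg_mul, one_mul, zero_mul]
    rw [Finset.sum_ite_eq' Finset.univ j₀ (fun j => -psiM k (2*n) l j),
      if_pos (Finset.mem_univ _), psiM_apply, Matrix.one_apply]
    simp only [Fin.ext_iff, hj₀]
    split_ifs <;> first | rfl | (exfalso; omega) | norm_num

variable {k : Type} [Field k] {n : ℕ}

lemma gram_eq {p : ℕ} (w : Fin p → Fin (2*n) → k) :
    Matrix.of (fun a b => symplForm k n (w a) (w b)) =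
      (Matrix.of w) * psiM k (2*n) * (Matrix.of w)ᵀ := by
  ext a b
  simp only [Matrix.mul_apply, Matrix.of_apply, Matrix.transpose_apply, symplForm,
    dotProduct, Matrix.mulVec]
  simp only [Finset.mul_sum, Finset.sum_mul]
  rw [Finset.sum_comm]
  apply Finset.sum_congr rfl
  intro l _
  apply Finset.sum_congr rfl
  intro j _
  ring

lemma gram_quad_zero {p : ℕ} (w : Fin p → Fin (2*n) → k) (z : Fin p → k) :
    ((Matrix.of (fun a b => symplForm k n (w a) (w b))).mulVec z) ⬝ᵥ z = 0 := by
  rw [gram_eq, Matrix.mul_assoc, ← Matrix.mulVec_mulVec, dotProduct_comm,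
    Matrix.dotProduct_mulVec, ← Matrix.mulVec_transpose, ← Matrix.mulVec_mulVec]
  exact symplForm_self k n ((Matrix.of w)ᵀ.mulVec z)

/-- extension by zero as a linear map -/
def extZero (k : Type) [Field k] (m : ℕ) : (Fin m → k) →ₗ[k] (Fin (m+1) → k) where
  toFun z := Fin.snoc z 0
  map_add' a b := by
    funext i
    cases i using Fin.lastCases <;> simp
  map_smul' c a := by
    funext i
    cases i using Fin.lastCases <;> simp

lemma quad_submatrix {m : ℕ} (A : Matrix (Fin (m+1)) (Fin (m+1)) k)
    (H2 : ∀ z, (A.mulVec z) ⬝ᵥ z = 0) (z' : Fin m → k) :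
    ((A.submatrix Fin.castSucc Fin.castSucc).mulVec z') ⬝ᵥ z' = 0 := by
  have key : (A.mulVec (Fin.snoc z' 0)) ⬝ᵥ (Fin.snoc z' 0)
      = ((A.submatrix Fin.castSucc Fin.castSucc).mulVec z') ⬝ᵥ z' := by
    rw [dotProduct, dotProduct, Fin.sum_univ_castSucc]
    simp only [Fin.snoc_castSucc, Fin.snoc_last, mul_zero, add_zero]
    apply Finset.sum_congr rfl
    intro i _
    congr 1
    simp only [Matrix.mulVec, dotProduct, Matrix.submatrix_apply]
    rw [Fin.sum_univ_castSucc]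
    simp [Fin.snoc_castSucc, Fin.snoc_last]
  rw [← key]; exact H2 _

lemma diag_zero {m : ℕ} (A : Matrix (Fin m) (Fin m) k)
    (H2 : ∀ z, (A.mulVec z) ⬝ᵥ z = 0) (i : Fin m) : A i i = 0 := by
  have := H2 (Pi.single i 1)
  rw [Matrix.mulVec_single_one, dotProduct, Finset.sum_eq_single i
    (fun b _ hb => by simp [Pi.single_eq_of_ne hb])
    (fun h => absurd (Finset.mem_univ i) h)] at this
  simpa using this

lemma core_rank_ge {m : ℕ} (A : Matrix (Fin (m+1)) (Fin (m+1)) k)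
    (H3 : IsUnit (A.submatrix Fin.castSucc Fin.castSucc).det) :
    m ≤ Module.finrank k (LinearMap.range A.mulVecLin) := by
  set A' := A.submatrix Fin.castSucc Fin.castSucc with hA'
  have hcomp : (LinearMap.funLeft k k Fin.castSucc) ∘ₗ (A.mulVecLin ∘ₗ extZero k m)
      = A'.mulVecLin := by
    apply LinearMap.ext
    intro z
    funext i
    simp only [LinearMap.comp_apply, LinearMap.funLeft_apply, Matrix.mulVecLin_apply,
      extZero, LinearMap.coe_mk, AddHom.coe_mk, Matrix.mulVec, dotProduct,
      Matrix.submatrix_apply, hA']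
    rw [Fin.sum_univ_castSucc]
    simp [Fin.snoc_castSucc, Fin.snoc_last]
  have hsurj : Function.Surjective A'.mulVecLin := by
    intro y
    refine ⟨A'⁻¹.mulVec y, ?_⟩
    rw [Matrix.mulVecLin_apply, Matrix.mulVec_mulVec, Matrix.mul_nonsing_inv _ H3,
      Matrix.one_mulVec]
  have h1 : Module.finrank k (LinearMap.range A'.mulVecLin) = m := by
    rw [LinearMap.range_eq_top.mpr hsurj, finrank_top, Module.finrank_pi, Fintype.card_fin]
  calc m = Module.finrank k (LinearMap.range ((LinearMap.funLeft k k Fin.castSucc) ∘ₗ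
        (A.mulVecLin ∘ₗ extZero k m))) := by rw [hcomp, h1]
    _ ≤ Module.finrank k (LinearMap.range (A.mulVecLin ∘ₗ extZero k m)) := by
        rw [LinearMap.range_comp]
        exact Submodule.finrank_map_le _ _
    _ ≤ Module.finrank k (LinearMap.range A.mulVecLin) :=
        Submodule.finrank_mono (LinearMap.range_comp_le_range _ _)

lemma core_singular {m : ℕ} (A : Matrix (Fin (m+1)) (Fin (m+1)) k)
    (H1 : ∀ i j, A j i = -A i j) (H2 : ∀ z, (A.mulVec z) ⬝ᵥ z = 0)
    (H3 : IsUnit (A.submatrix Fin.castSucc Fin.castSucc).det) :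
    ∃ u, u ≠ 0 ∧ A.mulVec u = 0 := by
  set A' := A.submatrix Fin.castSucc Fin.castSucc with hA'
  set c : Fin m → k := fun j => A j.castSucc (Fin.last m) with hc
  set z : Fin m → k := A'⁻¹.mulVec c with hz
  have hcz : A'.mulVec z = c := by
    rw [hz, Matrix.mulVec_mulVec, Matrix.mul_nonsing_inv _ H3, Matrix.one_mulVec]
  refine ⟨Fin.snoc (-z) 1, ?_, ?_⟩
  · intro h
    have := congrFun h (Fin.last m)
    simp [Fin.snoc_last] at this
  · funext i
    have expand : A.mulVec (Fin.snoc (-z) 1) i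
        = (∑ j : Fin m, A i j.castSucc * (-z j)) + A i (Fin.last m) := by
      simp only [Matrix.mulVec, dotProduct]
      rw [Fin.sum_univ_castSucc]
      simp [Fin.snoc_castSucc, Fin.snoc_last]
    induction i using Fin.lastCases with
    | last => -- last row
      rw [Pi.zero_apply, expand, diag_zero A H2, add_zero]
      have : ∀ j : Fin m, A (Fin.last m) j.castSucc * (-z j) = c j * z j := by
        intro j
        rw [H1 j.castSucc (Fin.last m)]
        rw [hc]; ring
      rw [Finset.sum_congr rfl (fun j _ => this j)]
      have : ∑ j : Fin m, c j * z j = (A'.mulVec z) ⬝ᵥ z := by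
        rw [hcz, dotProduct]
      rw [this]
      exact quad_submatrix A H2 z
    | cast i' => -- castSucc rows
      rw [Pi.zero_apply, expand]
      have h1 : ∑ j : Fin m, A i'.castSucc j.castSucc * (-z j) = -(A'.mulVec z i') := by
        simp only [Matrix.mulVec, dotProduct, hA', Matrix.submatrix_apply]
        rw [← Finset.sum_neg_distrib]
        apply Finset.sum_congr rfl
        intro j _
        ring
      rw [h1, hcz]
      simp [hc]

lemma range_ne_top_of_singular {m : ℕ} (A : Matrix (Fin m) (Fin m) k)
    (h : ∃ u, u ≠ 0 ∧ A.mulVec u = 0) :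
    LinearMap.range A.mulVecLin ≠ ⊤ := by
  obtain ⟨u, hu0, hu⟩ := h
  intro htop
  have hsurj : Function.Surjective A.mulVecLin := LinearMap.range_eq_top.mp htop
  have hinj : Function.Injective A.mulVecLin :=
    (LinearMap.injective_iff_surjective).mpr hsurj
  exact hu0 (hinj (by simp [Matrix.mulVecLin_apply, hu]))

lemma core_bordered {m : ℕ} (A : Matrix (Fin (m+1)) (Fin (m+1)) k)
    (H1 : ∀ i j, A j i = -A i j)
    (H3 : IsUnit (A.submatrix Fin.castSucc Fin.castSucc).det)
    (b : Fin (m+1) → k) (hb : b ∉ LinearMap.range A.mulVecLin)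
    (M : Matrix (Fin (m+2)) (Fin (m+2)) k)
    (hM1 : ∀ i j : Fin (m+1), M i.castSucc j.castSucc = A i j)
    (hM2 : ∀ i : Fin (m+1), M i.castSucc (Fin.last (m+1)) = b i)
    (hM3 : ∀ j : Fin (m+1), M (Fin.last (m+1)) j.castSucc = - b j)
    (hM4 : M (Fin.last (m+1)) (Fin.last (m+1)) = 0) :
    IsUnit M.det := by
  rw [isUnit_iff_ne_zero]
  intro hdet
  obtain ⟨u, hu0, hu⟩ := (Matrix.exists_mulVec_eq_zero_iff).mpr hdet
  set w : Fin (m+1) → k := fun i => u i.castSucc with hw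
  set t : k := u (Fin.last (m+1)) with ht
  have hrow : ∀ i : Fin (m+1), (A.mulVec w) i + b i * t = 0 := by
    intro i
    have h0 := congrFun hu i.castSucc
    rw [Matrix.mulVec, dotProduct, Fin.sum_univ_castSucc] at h0
    simpa [hM1, hM2, Matrix.mulVec, dotProduct] using h0
  have hlast : b ⬝ᵥ w = 0 := by
    have h0 := congrFun hu (Fin.last (m+1))
    rw [Matrix.mulVec, dotProduct, Fin.sum_univ_castSucc] at h0
    simp only [hM3, hM4, zero_mul, add_zero, neg_mul, Pi.zero_apply] at h0
    rw [dotProduct, ← neg_eq_zero, ← Finset.sum_neg_distrib]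
    exact h0
  by_cases hT : t = 0
  · -- t = 0 case
    have hAw : A.mulVec w = 0 := by
      funext i
      have h0 := hrow i
      rw [hT, mul_zero, add_zero] at h0
      exact h0
    have hwne : w ≠ 0 := by
      intro hw0
      apply hu0
      funext j
      induction j using Fin.lastCases with
      | last => exact hT
      | cast j' => exact congrFun hw0 j'
    obtain ⟨i₀, hi₀⟩ := Function.ne_iff.mp hwne
    set R := LinearMap.range A.mulVecLin with hR
    set T := R ⊔ Submodule.span k {b} with hTdef
    have h1 : m ≤ Module.finrank k R := core_rank_ge A H3
    have hlt : R < T := by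
      refine lt_of_le_of_ne le_sup_left ?_
      intro hEq
      exact hb (hEq ▸ Submodule.mem_sup_right (Submodule.mem_span_singleton_self b) : b ∈ R)
    have h2 := Submodule.finrank_lt_finrank_of_lt hlt
    have hfinV : Module.finrank k (Fin (m+1) → k) = m + 1 := by
      rw [Module.finrank_pi, Fintype.card_fin]
    have h3 : Module.finrank k ↥T ≤ m + 1 := by
      have := Submodule.finrank_le T
      omega
    have hTop : T = ⊤ := Submodule.eq_top_of_finrank_eq (by rw [hfinV]; omega)
    have hzero : ∀ z, w ⬝ᵥ z = 0 := by
      intro z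
      have hz : z ∈ T := hTop ▸ Submodule.mem_top
      obtain ⟨y, hy, c, hc, rfl⟩ := Submodule.mem_sup.mp hz
      obtain ⟨p, rfl⟩ := hy
      obtain ⟨a, rfl⟩ := Submodule.mem_span_singleton.mp hc
      have hAT : Aᵀ = -A := by
        ext i j
        rw [Matrix.transpose_apply, H1, Matrix.neg_apply]
      have hvm : w ᵥ* A = 0 := by
        have : w ᵥ* A = Aᵀ *ᵥ w := (Matrix.mulVec_transpose A w).symm
        rw [this, hAT, Matrix.neg_mulVec, hAw, neg_zero]
      rw [dotProduct_add, Matrix.mulVecLin_apply, Matrix.dotProduct_mulVec, hvm,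
        zero_dotProduct, dotProduct_smul, smul_eq_mul, dotProduct_comm,
        hlast, mul_zero, add_zero]
    have : w i₀ = 0 := by
      have h0 := hzero (Pi.single i₀ 1)
      rwa [dotProduct_single, mul_one] at h0
    exact hi₀ this
  · -- t ≠ 0 case
    apply hb
    refine ⟨(-t⁻¹) • w, ?_⟩
    rw [Matrix.mulVecLin_apply, Matrix.mulVec_smul]
    funext i
    have h0 := hrow i
    have hAwi : (A.mulVec w) i = -(b i * t) := by linear_combination h0
    rw [Pi.smul_apply, hAwi, smul_eq_mul]
    field_simp

lemma sympl_linmap_apply {m : ℕ} (w : Fin m → Fin (2*n) → k) (x : Fin (2*n) → k) (a : Fin m) :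
    Matrix.mulVecLin (Matrix.of fun i => Matrix.vecMul (w i) (psiM k (2*n))) x a
      = symplForm k n (w a) x := by
  rw [Matrix.mulVecLin_apply, symplForm, Matrix.dotProduct_mulVec]
  rfl

lemma sympl_map_surjective {m : ℕ} (w : Fin m → Fin (2*n) → k)
    (hw : LinearIndependent k w) :
    Function.Surjective
      (Matrix.mulVecLin (Matrix.of fun i => Matrix.vecMul (w i) (psiM k (2*n)))) := by
  set V : Matrix (Fin m) (Fin (2*n)) k := Matrix.of w with hV
  have hrank : V.rank = m := by
    rw [← Matrix.rank_transpose, Matrix.rank_eq_finrank_span_cols]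
    have : Set.range Vᵀ.col = Set.range w := rfl
    rw [this, finrank_span_eq_card hw, Fintype.card_fin]
  have hVsurj : Function.Surjective V.mulVecLin := by
    rw [← LinearMap.range_eq_top]
    apply Submodule.eq_top_of_finrank_eq
    have hdef : Module.finrank k ↥(LinearMap.range V.mulVecLin) = V.rank := rfl
    rw [hdef, hrank, Module.finrank_pi, Fintype.card_fin]
  intro y
  obtain ⟨x1, hx1⟩ := hVsurj y
  refine ⟨(psiM k (2*n))ᵀ.mulVec x1, ?_⟩
  have hC : (Matrix.of fun i => Matrix.vecMul (w i) (psiM k (2*n))) = V * psiM k (2*n) := by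
    ext i j
    simp [Matrix.mul_apply, Matrix.vecMul, dotProduct, hV]
  have hps : psiM k (2*n) *ᵥ ((psiM k (2*n))ᵀ *ᵥ x1) = x1 := by
    rw [Matrix.mulVec_mulVec, psiM_mul_transpose, Matrix.one_mulVec]
  rw [Matrix.mulVecLin_apply, hC, ← Matrix.mulVec_mulVec, hps]
  exact hx1

/-- Index type for the family of bad subspaces. -/
def BadIdx (n q : ℕ) : Type := ((Σ m : Fin (2*n), (Fin (m : ℕ) → Fin q)) × Bool)

instance (n q : ℕ) : Fintype (BadIdx n q) := by
  unfold BadIdx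
  infer_instance

/-- The bad subspaces. -/
noncomputable def badW (k : Type) [Field k] (n q : ℕ) (v : Fin q → Fin (2*n) → k)
    (p : BadIdx n q) : Submodule k (Fin (2*n) → k) :=
  cond p.2
    (Submodule.comap
      (Matrix.mulVecLin (Matrix.of fun i => Matrix.vecMul (v (p.1.2 i)) (psiM k (2*n))))
      (LinearMap.range (Matrix.mulVecLin
        (Matrix.of fun a b => symplForm k n (v (p.1.2 a)) (v (p.1.2 b))))))
    (Submodule.span k (Set.range fun a => v (p.1.2 a)))

/-- The truncated bad subspaces. -/
noncomputable def badW' (k : Type) [Field k] (n q : ℕ) (v : Fin q → Fin (2*n) → k)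
    (p : BadIdx n q) : Submodule k (Fin (2*n) → k) :=
  if Module.finrank k ↥(badW k n q v p) < 2*n then badW k n q v p else ⊥

lemma badW'_finrank (k : Type) [Field k] (n q : ℕ) (hn : 1 ≤ n)
    (v : Fin q → Fin (2*n) → k) (p : BadIdx n q) :
    Module.finrank k ↥(badW' k n q v p) < 2*n := by
  have hrfl : badW' k n q v p
      = if Module.finrank k ↥(badW k n q v p) < 2*n then badW k n q v p else ⊥ := rfl
  by_cases h : Module.finrank k ↥(badW k n q v p) < 2*n
  · rw [hrfl, if_pos h]
    exact h
  · rw [hrfl, if_neg h, finrank_bot]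
    omega

lemma badW'_eq (k : Type) [Field k] (n q : ℕ) (v : Fin q → Fin (2*n) → k)
    (p : BadIdx n q) (h : Module.finrank k ↥(badW k n q v p) < 2*n) :
    badW' k n q v p = badW k n q v p := if_pos h

/-- Let `k` be a field and `v = (v₁,...,v_q)` a non-degenerate unimodular
sequence in the standard symplectic space `k^{2n}` (`n ≥ 1`).  Then there are finitely many
proper linear subspaces `V₁,...,V_s` of `k^{2n}`, each of dimension `< 2n`, such that every
`x ∉ V₁ ∪ ... ∪ V_s` is in good position with respect to `v`, i.e. `(v₁,...,v_q,x)` is again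
a non-degenerate unimodular sequence. -/
theorem exists_finitely_many_subspaces_good_position (k : Type) [Field k] (n q : ℕ)
    (hn : 1 ≤ n) (v : Fin q → Fin (2 * n) → k) (hv : IsNondegUnimodSeqField k n q v) :
    ∃ (s : ℕ) (V : Fin s → Submodule k (Fin (2 * n) → k)),
      (∀ j, Module.finrank k ↥(V j) < 2 * n) ∧
      ∀ x : Fin (2 * n) → k, (∀ j, x ∉ V j) →
        IsNondegUnimodSeqField k n (q + 1) (Fin.snoc v x) := by
  classical
  set e := Fintype.equivFin (BadIdx n q) with he
  refine ⟨Fintype.card (BadIdx n q), fun j => badW' k n q v (e.symm j),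
    fun j => badW'_finrank k n q hn v _, ?_⟩
  intro x hx
  have hxW : ∀ p : BadIdx n q, Module.finrank k ↥(badW k n q v p) < 2*n →
      x ∉ badW k n q v p := by
    intro p hp hmem
    have h0 := hx (e p)
    simp only [Equiv.symm_apply_apply] at h0
    rw [badW'_eq k n q v p hp] at h0
    exact h0 hmem
  have hfinV : Module.finrank k (Fin (2*n) → k) = 2*n := by
    rw [Module.finrank_pi, Fintype.card_fin]
  set vx : Fin (q+1) → Fin (2*n) → k := Fin.snoc v x with hvx
  constructor
  · -- linear independence
    intro r f hr hf
    by_cases hq : ∀ a, (f a : ℕ) < q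
    · -- x not involved
      set f' : Fin r → Fin q := fun a => ⟨(f a : ℕ), hq a⟩ with hf'
      have hsm : StrictMono f' := by
        intro a b hab
        simp only [Fin.lt_def]
        exact hf hab
      have heq : (fun a => vx (f a)) = fun a => v (f' a) := by
        funext a
        have h1 : f a = (f' a).castSucc := Fin.ext rfl
        rw [hvx, h1, Fin.snoc_castSucc]
      rw [heq]
      have hrq : r ≤ q := by
        have := Fintype.card_le_of_injective f' hsm.injective
        simpa using this
      exact hv.1 r f' (le_min hrq (le_trans hr (min_le_right _ _))) hsm
    · push_neg at hq
      obtain ⟨a0, ha0⟩ := hq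
      cases r with
      | zero => exact linearIndependent_empty_type
      | succ m =>
        have hflast : f (Fin.last m) = Fin.last q := by
          have h1 : (f a0 : ℕ) ≤ (f (Fin.last m) : ℕ) := by
            rcases eq_or_lt_of_le (Fin.le_last a0) with h | h
            · rw [h]
            · exact le_of_lt (hf h)
          have h2 : (f (Fin.last m) : ℕ) < q + 1 := (f (Fin.last m)).isLt
          refine Fin.ext ?_
          rw [Fin.val_last]
          omega
        have hglt : ∀ a : Fin m, (f a.castSucc : ℕ) < q := by
          intro a
          have h3 := hf (Fin.castSucc_lt_last a)
          rw [hflast] at h3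
          rw [Fin.lt_def, Fin.val_last] at h3
          exact h3
        set g : Fin m → Fin q := fun a => ⟨(f a.castSucc : ℕ), hglt a⟩ with hg
        have hsg : StrictMono g := by
          intro a b hab
          simp only [Fin.lt_def]
          exact hf (Fin.castSucc_lt_castSucc_iff.mpr hab)
        have hveq : (fun a => vx (f a))
            = (Fin.snoc (fun a => v (g a)) x : Fin (m+1) → Fin (2*n) → k) := by
          funext a
          induction a using Fin.lastCases with
          | last => rw [hvx, hflast, Fin.snoc_last, Fin.snoc_last]
          | cast a' =>
            have h4 : f a'.castSucc = (g a').castSucc := Fin.ext rfl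
            rw [hvx, h4, Fin.snoc_castSucc, Fin.snoc_castSucc]
        have hmq : m ≤ q := by
          have := Fintype.card_le_of_injective g hsg.injective
          simpa using this
        have hm2n : m + 1 ≤ 2*n := le_trans hr (min_le_right _ _)
        have hLI : LinearIndependent k fun a => v (g a) :=
          hv.1 m g (le_min hmq (by omega)) hsg
        rw [hveq, linearIndependent_fin_snoc]
        refine ⟨hLI, ?_⟩
        intro hmem
        have hmlt : m < 2*n := by omega
        refine hxW ⟨⟨⟨m, hmlt⟩, g⟩, false⟩ ?_ ?_
        · show Module.finrank k
            ↥(Submodule.span k (Set.range fun a => v (g a))) < 2*n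
          rw [finrank_span_eq_card hLI, Fintype.card_fin]
          exact hmlt
        · exact hmem
  · -- Gram condition
    intro r f hr0 hre hr hf
    by_cases hq : ∀ a, (f a : ℕ) < q
    · set f' : Fin r → Fin q := fun a => ⟨(f a : ℕ), hq a⟩ with hf'
      have hsm : StrictMono f' := by
        intro a b hab
        simp only [Fin.lt_def]
        exact hf hab
      have heq : ∀ a, vx (f a) = v (f' a) := by
        intro a
        have h1 : f a = (f' a).castSucc := Fin.ext rfl
        rw [hvx, h1, Fin.snoc_castSucc]
      have hmeq : (Matrix.of fun a b : Fin r =>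
          symplForm k n (vx (f a)) (vx (f b)))
          = Matrix.of fun a b : Fin r => symplForm k n (v (f' a)) (v (f' b)) := by
        ext a b
        simp only [Matrix.of_apply]
        rw [heq a, heq b]
      rw [hmeq]
      have hrq : r ≤ q := by
        have := Fintype.card_le_of_injective f' hsm.injective
        simpa using this
      exact hv.2 r f' hr0 hre (le_min hrq (le_trans hr (min_le_right _ _))) hsm
    · push_neg at hq
      obtain ⟨a0, ha0⟩ := hq
      cases r with
      | zero => omega
      | succ m =>
      cases m with
      | zero => exact absurd hre (by decide)
      | succ m' =>
        have hflast : f (Fin.last (m'+1)) = Fin.last q := by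
          have h1 : (f a0 : ℕ) ≤ (f (Fin.last (m'+1)) : ℕ) := by
            rcases eq_or_lt_of_le (Fin.le_last a0) with h | h
            · rw [h]
            · exact le_of_lt (hf h)
          have h2 : (f (Fin.last (m'+1)) : ℕ) < q + 1 := (f (Fin.last (m'+1))).isLt
          refine Fin.ext ?_
          rw [Fin.val_last]
          omega
        have hglt : ∀ a : Fin (m'+1), (f a.castSucc : ℕ) < q := by
          intro a
          have h3 := hf (Fin.castSucc_lt_last a)
          rw [hflast] at h3
          rw [Fin.lt_def, Fin.val_last] at h3
          exact h3
        set g : Fin (m'+1) → Fin q := fun a => ⟨(f a.castSucc : ℕ), hglt a⟩ with hg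
        have hsg : StrictMono g := by
          intro a b hab
          simp only [Fin.lt_def]
          exact hf (Fin.castSucc_lt_castSucc_iff.mpr hab)
        have hveq : ∀ a : Fin (m'+2), vx (f a)
            = (Fin.snoc (fun c => v (g c)) x : Fin (m'+2) → Fin (2*n) → k) a := by
          intro a
          induction a using Fin.lastCases with
          | last => rw [hvx, hflast, Fin.snoc_last, Fin.snoc_last]
          | cast a' =>
            have h4 : f a'.castSucc = (g a').castSucc := Fin.ext rfl
            rw [hvx, h4, Fin.snoc_castSucc, Fin.snoc_castSucc]
        have hmq : m' + 1 ≤ q := by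
          have := Fintype.card_le_of_injective g hsg.injective
          simpa using this
        have hm2n : m' + 2 ≤ 2*n := le_trans hr (min_le_right _ _)
        have hLI : LinearIndependent k fun a => v (g a) :=
          hv.1 (m'+1) g (le_min hmq (by omega)) hsg
        set A : Matrix (Fin (m'+1)) (Fin (m'+1)) k :=
          Matrix.of fun a b => symplForm k n (v (g a)) (v (g b)) with hA
        have H1 : ∀ i j, A j i = -A i j := by
          intro i j
          show symplForm k n (v (g j)) (v (g i)) = - symplForm k n (v (g i)) (v (g j))
          exact symplForm_comm k n (v (g i)) (v (g j))
        have H2 : ∀ z, (A.mulVec z) ⬝ᵥ z = 0 := fun z =>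
          gram_quad_zero (fun a => v (g a)) z
        have H3 : IsUnit (A.submatrix Fin.castSucc Fin.castSucc).det := by
          rcases Nat.eq_zero_or_pos m' with hm0 | hmpos
          · subst hm0
            have hd : (A.submatrix Fin.castSucc Fin.castSucc).det = 1 :=
              Matrix.det_fin_zero
            rw [hd]
            exact isUnit_one
          · have hsub : A.submatrix Fin.castSucc Fin.castSucc
                = Matrix.of fun a b : Fin m' =>
                  symplForm k n (v ((g ∘ Fin.castSucc) a)) (v ((g ∘ Fin.castSucc) b)) := by
              ext a b
              rfl
            rw [hsub]
            have heven : Even m' := by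
              rcases hre with ⟨c, hc⟩
              exact ⟨c - 1, by omega⟩
            exact hv.2 m' (g ∘ Fin.castSucc) hmpos heven
              (le_min (by omega) (by omega))
              (hsg.comp Fin.strictMono_castSucc)
        have hsing := core_singular A H1 H2 H3
        have hRne := range_ne_top_of_singular A hsing
        set bb : Fin (m'+1) → k := fun i => symplForm k n (v (g i)) x with hbb
        set Lmap := Matrix.mulVecLin
          (Matrix.of fun i => Matrix.vecMul (v (g i)) (psiM k (2*n))) with hL
        have hLx : Lmap x = bb := by
          funext i
          rw [hL, sympl_linmap_apply]
        have hmlt : m' + 1 < 2*n := by omega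
        have hWidx : badW k n q v ⟨⟨⟨m'+1, hmlt⟩, g⟩, true⟩
            = Submodule.comap Lmap (LinearMap.range A.mulVecLin) := rfl
        have hfr : Module.finrank k ↥(badW k n q v ⟨⟨⟨m'+1, hmlt⟩, g⟩, true⟩) < 2*n := by
          have hne : badW k n q v ⟨⟨⟨m'+1, hmlt⟩, g⟩, true⟩ ≠ ⊤ := by
            obtain ⟨y, hy⟩ : ∃ y, y ∉ LinearMap.range A.mulVecLin := by
              by_contra hcon
              push_neg at hcon
              exact hRne (Submodule.eq_top_iff'.mpr hcon)
            obtain ⟨x0, hx0⟩ := sympl_map_surjective (fun a => v (g a)) hLI y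
            intro htop
            apply hy
            have hx0mem : x0 ∈ badW k n q v ⟨⟨⟨m'+1, hmlt⟩, g⟩, true⟩ :=
              htop ▸ Submodule.mem_top
            rw [hWidx, Submodule.mem_comap] at hx0mem
            rwa [hL, hx0] at hx0mem
          have h5 := Submodule.finrank_lt (s := badW k n q v ⟨⟨⟨m'+1, hmlt⟩, g⟩, true⟩)
            hne
          rwa [hfinV] at h5
        have hbnotin : bb ∉ LinearMap.range A.mulVecLin := by
          intro hmem
          apply hxW _ hfr
          rw [hWidx, Submodule.mem_comap, hLx]
          exact hmem
        have hmeq : (Matrix.of fun a b : Fin (m'+2) =>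
            symplForm k n (vx (f a)) (vx (f b)))
            = Matrix.of fun a b : Fin (m'+2) =>
              symplForm k n ((Fin.snoc (fun c => v (g c)) x : Fin (m'+2) → Fin (2*n) → k) a)
                ((Fin.snoc (fun c => v (g c)) x : Fin (m'+2) → Fin (2*n) → k) b) := by
          ext a b
          simp only [Matrix.of_apply]
          rw [hveq a, hveq b]
        rw [hmeq]
        apply core_bordered A H1 H3 bb hbnotin
        · intro i j
          simp only [Matrix.of_apply, Fin.snoc_castSucc]
          try rfl
        · intro i
          simp only [Matrix.of_apply, Fin.snoc_castSucc, Fin.snoc_last]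
          try rfl
        · intro j
          simp only [Matrix.of_apply, Fin.snoc_castSucc, Fin.snoc_last]
          try exact symplForm_comm k n (v (g j)) x
        · simp only [Matrix.of_apply, Fin.snoc_last]
          try exact symplForm_self k n x
end
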